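/- Let δ ∈ [0, 1/2], pz ∈ [0, 1/2] and R1 ≥ 0, and define R_DF = min{R1, 1 − h2(δ ⋆ pz)} and R_CF = 1 − h2(δ ⋆ h2⁻¹(1 − R1)). If pz < h2⁻¹(1 − R1) then max{R_DF, R_CF} = R_DF, and if pz ≥ h2⁻¹(1 − R1) then max{R_DF, R_CF} = R_CF. (In the binary symmetric multihop relay channel with state parameter pz, noise parameter δ, and relay–destination link rate R1, the best of the decode-and-forward and compress-and-forward rates equals the decode-and-forward rate below the threshold pz = h2⁻¹(1 − R1) and the compress-and-forward rate above it.) -/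
import Mathlib


open MeasureTheory

/-- Binary entropy function (base 2), with the convention `0 * log₂ 0 = 0`
(automatic since `Real.logb 2 0 = 0`). -/
noncomputable def h2 (p : ℝ) : ℝ :=
  -(p * Real.logb 2 p) - (1 - p) * Real.logb 2 (1 - p)

/-- Inverse of the binary entropy function: for `q ≥ 0`, the unique `r ∈ [0, 1/2]`
with `h2 r = q` (realized as the infimum of the solution set); `0` for `q < 0`. -/
noncomputable def h2inv (q : ℝ) : ℝ :=
  if q < 0 then 0 else sInf {r : ℝ | 0 ≤ r ∧ r ≤ 1 / 2 ∧ h2 r = q}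

/-- Binary convolution `a ⋆ b = a(1-b) + (1-a)b`. -/
def bconv (a b : ℝ) : ℝ := a * (1 - b) + (1 - a) * b

lemma h2_eq (p : ℝ) : h2 p = Real.binEntropy p / Real.log 2 := by
  simp only [h2, Real.binEntropy, Real.logb, Real.log_inv]
  ring

lemma h2_continuous : Continuous h2 := by
  simp only [funext h2_eq]
  exact Real.binEntropy_continuous.div_const _

lemma h2_mono {a b : ℝ} (ha : 0 ≤ a) (hab : a ≤ b) (hb : b ≤ 1 / 2) : h2 a ≤ h2 b := by
  rw [h2_eq, h2_eq]
  have hlog : 0 < Real.log 2 := Real.log_pos (by norm_num)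
  have h2inv : (2:ℝ)⁻¹ = 1 / 2 := by norm_num
  have : Real.binEntropy a ≤ Real.binEntropy b := by
    rcases eq_or_lt_of_le hab with rfl | h
    · exact le_rfl
    · exact (Real.binEntropy_strictMonoOn
        ⟨ha, by rw [h2inv]; linarith⟩ ⟨by linarith, by rw [h2inv]; linarith⟩ h).le
  gcongr

lemma h2_zero : h2 0 = 0 := by simp [h2]

lemma h2_half : h2 (1 / 2) = 1 := by
  have : Real.logb 2 (1 / 2) = -1 := by
    rw [show (1 : ℝ) / 2 = 2⁻¹ by norm_num, Real.logb_inv, Real.logb_self_eq_one] ; norm_num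
  simp only [h2]
  norm_num [this]

lemma h2inv_spec {q : ℝ} (h0 : 0 ≤ q) (h1 : q ≤ 1) :
    0 ≤ h2inv q ∧ h2inv q ≤ 1 / 2 ∧ h2 (h2inv q) = q := by
  have hq : ¬ q < 0 := not_lt.2 h0
  rw [h2inv, if_neg hq]
  set S : Set ℝ := {r : ℝ | 0 ≤ r ∧ r ≤ 1 / 2 ∧ h2 r = q} with hS
  have hclosed : IsClosed S := by
    have : S = Set.Icc 0 (1 / 2) ∩ h2 ⁻¹' {q} := by
      ext r; simp [hS, Set.mem_Icc, and_assoc]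
    rw [this]
    exact isClosed_Icc.inter (isClosed_singleton.preimage h2_continuous)
  have hne : S.Nonempty := by
    have := intermediate_value_Icc (by norm_num : (0:ℝ) ≤ 1/2) h2_continuous.continuousOn
    have hmem : q ∈ Set.Icc (h2 0) (h2 (1/2)) := by
      rw [h2_zero, h2_half]; exact ⟨h0, h1⟩
    obtain ⟨r, hr, hrq⟩ := this hmem
    exact ⟨r, hr.1, hr.2, hrq⟩
  have hbdd : BddBelow S := ⟨0, fun r hr => hr.1⟩
  have := hclosed.csInf_mem hne hbdd
  exact ⟨this.1, this.2.1, this.2.2⟩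

/-- Binary symmetric multihop relay channel: the best of the DF and CF rates is
the DF rate below the threshold `pz = h2⁻¹(1 − R1)` and the CF rate above it. -/
theorem stmt6 (δ pz R1 : ℝ) (hδ : δ ∈ Set.Icc (0 : ℝ) (1 / 2))
    (hpz : pz ∈ Set.Icc (0 : ℝ) (1 / 2)) (hR1 : 0 ≤ R1)
    (RDF RCF : ℝ)
    (hDF : RDF = min R1 (1 - h2 (bconv δ pz)))
    (hCF : RCF = 1 - h2 (bconv δ (h2inv (1 - R1)))) :
    (pz < h2inv (1 - R1) → max RDF RCF = RDF) ∧
    (h2inv (1 - R1) ≤ pz → max RDF RCF = RCF) := by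
  obtain ⟨hδ0, hδ2⟩ := hδ
  obtain ⟨hpz0, hpz2⟩ := hpz
  set t := h2inv (1 - R1) with ht
  -- basic facts about t in all cases
  have hTprops : 0 ≤ t ∧ t ≤ 1 / 2 := by
    rcases lt_or_ge (1 - R1) 0 with h | h
    · rw [ht, h2inv, if_pos h]; norm_num
    · obtain ⟨a, b, _⟩ := h2inv_spec h (by linarith)
      exact ⟨a, b⟩
  obtain ⟨ht0, ht2⟩ := hTprops
  have hbconv_mono : ∀ a b : ℝ, 0 ≤ a → a ≤ b → bconv δ a ≤ bconv δ b := by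
    intro a b _ hab
    simp only [bconv]
    nlinarith
  have hbconv_le : ∀ b : ℝ, 0 ≤ b → b ≤ 1 / 2 → bconv δ b ≤ 1 / 2 := by
    intro b hb0 hb2
    simp only [bconv]
    nlinarith
  have hbconv_ge0 : ∀ b : ℝ, 0 ≤ b → b ≤ 1 / 2 → 0 ≤ bconv δ b := by
    intro b hb0 hb2
    simp only [bconv]
    nlinarith
  have hbconv_ge : ∀ b : ℝ, 0 ≤ b → b ≤ 1 / 2 → b ≤ bconv δ b := by
    intro b hb0 hb2
    simp only [bconv]
    nlinarith
  constructor
  · -- pz < t : show RCF ≤ RDF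
    intro hlt
    have hR1' : 0 ≤ 1 - R1 := by
      by_contra h
      push_neg at h
      have : t = 0 := by rw [ht, h2inv, if_pos (by linarith)]
      linarith
    obtain ⟨_, _, hth2⟩ := h2inv_spec hR1' (by linarith)
    rw [max_eq_left]
    rw [hDF, hCF, le_min_iff]
    constructor
    · -- RCF ≤ R1
      have h1 : t ≤ bconv δ t := hbconv_ge t ht0 ht2
      have h2' : bconv δ t ≤ 1 / 2 := hbconv_le t ht0 ht2
      have := h2_mono ht0 h1 h2'
      rw [← ht] at hth2
      rw [hth2] at this
      linarith
    · -- RCF ≤ 1 - h2 (bconv δ pz)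
      have h1 : bconv δ pz ≤ bconv δ t := hbconv_mono pz t hpz0 hlt.le
      have := h2_mono (hbconv_ge0 pz hpz0 hpz2) h1 (hbconv_le t ht0 ht2)
      linarith
  · -- t ≤ pz : show RDF ≤ RCF
    intro hle
    rw [max_eq_right]
    rw [hDF, hCF]
    have h1 : bconv δ t ≤ bconv δ pz := hbconv_mono t pz ht0 hle
    have := h2_mono (hbconv_ge0 t ht0 ht2) h1 (hbconv_le pz hpz0 hpz2)
    calc min R1 (1 - h2 (bconv δ pz)) ≤ 1 - h2 (bconv δ pz) := min_le_right _ _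
      _ ≤ 1 - h2 (bconv δ t) := by linarith
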